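/- On E := (Fin n → ℝ) × (Fin n → ℝ) with the standard primitive λ(p,q)(u,v) := (1/2)·∑ i, (p i * v i − q i * u i) of the standard symplectic form ω₀((p,q),(u,v)) := ∑ i, (p i * v i − q i * u i), every translation τ_w(z) := z + w satisfies the symplectic condition (τ_w^*λ − λ is the constant one-form (1/2)·ω₀(w,·), hence closed), and for every basepoint x ∈ E and all v, w ∈ E the Ismagilov–Losik–Michor cocycle evaluates as 𝔊_{x,λ}(τ_v, τ_w) = (1/2)·ω₀(v, w). -/

import Mathlib

open MeasureTheory intervalIntegral

noncomputable section

/-- The standard symplectic form `ω₀` on `(Fin n → ℝ) × (Fin n → ℝ)`. -/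
def omega0 {n : ℕ} (z w : (Fin n → ℝ) × (Fin n → ℝ)) : ℝ :=
  ∑ i, (z.1 i * w.2 i - z.2 i * w.1 i)

/-- The standard primitive `λ(p,q)(u,v) = (1/2)·∑ i, (p i * v i − q i * u i)` of the
standard symplectic form, so that `dλ = ω₀`. -/
def stdPrimitive (n : ℕ) (z : (Fin n → ℝ) × (Fin n → ℝ)) :
    ((Fin n → ℝ) × (Fin n → ℝ)) →L[ℝ] ℝ :=
  LinearMap.toContinuousLinearMap
    { toFun := fun w => (1 / 2) * ∑ i, (z.1 i * w.2 i - z.2 i * w.1 i)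
      map_add' := by
        intro a b
        simp only [Prod.fst_add, Prod.snd_add, Pi.add_apply]
        rw [← mul_add, ← Finset.sum_add_distrib]
        congr 1
        apply Finset.sum_congr rfl
        intro i _
        ring
      map_smul' := by
        intro r a
        simp only [Prod.smul_fst, Prod.smul_snd, Pi.smul_apply, smul_eq_mul,
          RingHom.id_apply]
        rw [Finset.mul_sum, Finset.mul_sum, Finset.mul_sum]
        apply Finset.sum_congr rfl
        intro i _
        ring }

/-- The pullback `g^*λ` of a one-form `λ` by a differentiable map `g`. -/
def oneFormPullback {n : ℕ}
    (g : (Fin n → ℝ) × (Fin n → ℝ) → (Fin n → ℝ) × (Fin n → ℝ))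
    (lam : (Fin n → ℝ) × (Fin n → ℝ) → (((Fin n → ℝ) × (Fin n → ℝ)) →L[ℝ] ℝ)) :
    (Fin n → ℝ) × (Fin n → ℝ) → (((Fin n → ℝ) × (Fin n → ℝ)) →L[ℝ] ℝ) :=
  fun y => (lam (g y)).comp (fderiv ℝ g y)

/-- A one-form is closed if its derivative is symmetric. -/
def IsClosedOneForm {n : ℕ}
    (ω : (Fin n → ℝ) × (Fin n → ℝ) → (((Fin n → ℝ) × (Fin n → ℝ)) →L[ℝ] ℝ)) : Prop :=
  ∀ y u v : (Fin n → ℝ) × (Fin n → ℝ), ((fderiv ℝ ω y) u) v = ((fderiv ℝ ω y) v) u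

/-- The Ismagilov–Losik–Michor two-cocycle `𝔊_{x,λ}(g,h)`: the line integral of
`g^*λ − λ` along the straight segment from `x` to `h x`. -/
def ILM {n : ℕ} (x : (Fin n → ℝ) × (Fin n → ℝ))
    (lam : (Fin n → ℝ) × (Fin n → ℝ) → ((Fin n → ℝ) × (Fin n → ℝ)) →L[ℝ] ℝ)
    (g h : (Fin n → ℝ) × (Fin n → ℝ) → (Fin n → ℝ) × (Fin n → ℝ)) : ℝ :=
  ∫ t in (0:ℝ)..1,
    (oneFormPullback g lam (x + t • (h x - x)) - lam (x + t • (h x - x))) (h x - x)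

lemma stdPrimitive_apply_eq_half_omega0 {n : ℕ} (z u : (Fin n → ℝ) × (Fin n → ℝ)) :
    stdPrimitive n z u = (1 / 2) * omega0 z u := rfl

lemma stdPrimitive_add {n : ℕ} (a b : (Fin n → ℝ) × (Fin n → ℝ)) :
    stdPrimitive n (a + b) = stdPrimitive n a + stdPrimitive n b := by
  refine ContinuousLinearMap.ext fun u => ?_
  rw [add_apply, stdPrimitive_apply_eq_half_omega0,
    stdPrimitive_apply_eq_half_omega0, stdPrimitive_apply_eq_half_omega0, ← mul_add, omega0,
    omega0, omega0, ← Finset.sum_add_distrib]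
  congr 1
  exact Finset.sum_congr rfl fun i _ => by
    simp only [Prod.fst_add, Prod.snd_add, Pi.add_apply]
    ring

lemma oneFormPullback_add_const {n : ℕ}
    (lam : (Fin n → ℝ) × (Fin n → ℝ) → ((Fin n → ℝ) × (Fin n → ℝ)) →L[ℝ] ℝ)
    (w y : (Fin n → ℝ) × (Fin n → ℝ)) :
    oneFormPullback (fun z => z + w) lam y = lam (y + w) := by
  rw [oneFormPullback, fderiv_add_const, fderiv_fun_id, ContinuousLinearMap.comp_id]

lemma oneFormPullback_add_const_sub_stdPrimitive {n : ℕ}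
    (w : (Fin n → ℝ) × (Fin n → ℝ)) :
    (fun y => oneFormPullback (fun z => z + w) (stdPrimitive n) y - stdPrimitive n y)
      = fun _ => stdPrimitive n w := by
  funext y
  rw [oneFormPullback_add_const, stdPrimitive_add, add_sub_cancel_left]

lemma isClosedOneForm_const {n : ℕ} (c : ((Fin n → ℝ) × (Fin n → ℝ)) →L[ℝ] ℝ) :
    IsClosedOneForm (fun _ => c) := by
  intro y u v
  rw [fderiv_fun_const]
  rfl

lemma ILM_eq_of_pullback_sub_eq_const {n : ℕ} (x : (Fin n → ℝ) × (Fin n → ℝ))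
    (lam : (Fin n → ℝ) × (Fin n → ℝ) → ((Fin n → ℝ) × (Fin n → ℝ)) →L[ℝ] ℝ)
    (g h : (Fin n → ℝ) × (Fin n → ℝ) → (Fin n → ℝ) × (Fin n → ℝ))
    (c : ((Fin n → ℝ) × (Fin n → ℝ)) →L[ℝ] ℝ)
    (hc : (fun y => oneFormPullback g lam y - lam y) = fun _ => c) :
    ILM x lam g h = c (h x - x) := by
  have hc' (y) : oneFormPullback g lam y - lam y = c := congrFun hc y
  simp only [ILM, hc', intervalIntegral.integral_const, sub_zero, one_smul]

/-- Every translation `τ_w(z) = z + w` is symplectic for the standard primitive `λ`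
(`τ_w^*λ − λ` is a constant one-form, hence closed), and the Ismagilov–Losik–Michor
cocycle evaluates on translations as `𝔊_{x,λ}(τ_v, τ_w) = (1/2)·ω₀(v, w)`. -/
theorem ILM_on_translations {n : ℕ} :
    (∀ w : (Fin n → ℝ) × (Fin n → ℝ),
      IsClosedOneForm (fun y =>
        oneFormPullback (fun z => z + w) (stdPrimitive n) y - stdPrimitive n y)) ∧
    ∀ (x v w : (Fin n → ℝ) × (Fin n → ℝ)),
      ILM x (stdPrimitive n) (fun z => z + v) (fun z => z + w)
        = (1 / 2) * omega0 v w := by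
  refine ⟨fun w => ?_, fun x v w => ?_⟩
  · rw [oneFormPullback_add_const_sub_stdPrimitive]
    exact isClosedOneForm_const _
  · rw [ILM_eq_of_pullback_sub_eq_const x _ _ _ _
      (oneFormPullback_add_const_sub_stdPrimitive v), add_sub_cancel_left, stdPrimitive_apply_eq_half_omega0]

end
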